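/- If S is a regular and stable semigroup, then H_L(S) = H_R(S) = H_H(S) = H_E(S) = H_J(S) (equalities in ℕ ∪ {∞}). -/
import Mathlib


namespace GreenHeights

universe u

section Defs

variable {S : Type u} [Semigroup S]

/-- Green's preorder `≤_L`: `a ≤_L b` iff `a = s * b` for some `s ∈ S¹`
(i.e. `a = b` or `a = s * b` for some `s ∈ S`). -/
def leL (a b : S) : Prop := a = b ∨ ∃ s : S, a = s * b

/-- Green's preorder `≤_R`: `a ≤_R b` iff `a = b * s` for some `s ∈ S¹`. -/
def leR (a b : S) : Prop := a = b ∨ ∃ s : S, a = b * s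

/-- Green's preorder `≤_J`: `a ≤_J b` iff `a = s * b * t` for some `s, t ∈ S¹`. -/
def leJ (a b : S) : Prop :=
  a = b ∨ (∃ s : S, a = s * b) ∨ (∃ t : S, a = b * t) ∨ ∃ s t : S, a = s * b * t

/-- Green's preorder `≤_H`. -/
def leH (a b : S) : Prop := leL a b ∧ leR a b

/-- Green's relation `L`. -/
def eqvL (a b : S) : Prop := leL a b ∧ leL b a

/-- Green's relation `R`. -/
def eqvR (a b : S) : Prop := leR a b ∧ leR b a

/-- Green's relation `J`. -/
def eqvJ (a b : S) : Prop := leJ a b ∧ leJ b a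

/-- Green's relation `H`. -/
def eqvH (a b : S) : Prop := leH a b ∧ leH b a

/-- `a <_L b`. -/
def ltL (a b : S) : Prop := leL a b ∧ ¬ leL b a

/-- `a <_R b`. -/
def ltR (a b : S) : Prop := leR a b ∧ ¬ leR b a

/-- `a <_J b`. -/
def ltJ (a b : S) : Prop := leJ a b ∧ ¬ leJ b a

/-- `a <_H b`. -/
def ltH (a b : S) : Prop := leH a b ∧ ¬ leH b a

end Defs

/-- The set of lengths of strictly decreasing chains with respect to a relation `lt`:
`m` is a chain length if there is a sequence `c 0 >' c 1 >' … >' c (m-1)`. -/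
def chainLengths {T : Type u} (lt : T → T → Prop) : Set ℕ :=
  {m | ∃ c : Fin m → T, ∀ i j : Fin m, i < j → lt (c j) (c i)}

/-- The height: the supremum, in `ℕ∞`, of the lengths of strictly decreasing chains. -/
noncomputable def heightOf {T : Type u} (lt : T → T → Prop) : ℕ∞ :=
  ⨆ m ∈ chainLengths lt, (m : ℕ∞)

/-- The `L`-height of a semigroup. -/
noncomputable def HL (S : Type u) [Semigroup S] : ℕ∞ := heightOf (ltL (S := S))

/-- The `R`-height of a semigroup. -/
noncomputable def HR (S : Type u) [Semigroup S] : ℕ∞ := heightOf (ltR (S := S))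

/-- The `J`-height of a semigroup. -/
noncomputable def HJ (S : Type u) [Semigroup S] : ℕ∞ := heightOf (ltJ (S := S))

/-- The `H`-height of a semigroup. -/
noncomputable def HH (S : Type u) [Semigroup S] : ℕ∞ := heightOf (ltH (S := S))

/-- `S` is left stable if `a ≤_L b` and `a J b` imply `a L b`. -/
def LeftStable (S : Type u) [Semigroup S] : Prop :=
  ∀ a b : S, leL a b → eqvJ a b → eqvL a b

/-- `S` is right stable if `a ≤_R b` and `a J b` imply `a R b`. -/
def RightStable (S : Type u) [Semigroup S] : Prop :=
  ∀ a b : S, leR a b → eqvJ a b → eqvR a b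

/-- `S` is stable if it is both left and right stable. -/
def Stable (S : Type u) [Semigroup S] : Prop := LeftStable S ∧ RightStable S

/-- The strict order on the poset of idempotents: `a < b` iff `a` and `b` are idempotents
with `b * a = a`, `a * b = a` (i.e. `a ≤ b`) and `a ≠ b`. -/
def ltE {S : Type u} [Semigroup S] (a b : S) : Prop :=
  a * a = a ∧ b * b = b ∧ b * a = a ∧ a * b = a ∧ a ≠ b

/-- The `E`-height of a semigroup: the height of its poset of idempotents. -/
noncomputable def HE (S : Type u) [Semigroup S] : ℕ∞ := heightOf (ltE (S := S))

/-- A semigroup is regular if every element `a` has an inverse `b`: `a = aba`, `b = bab`. -/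
def Regular (S : Type u) [Semigroup S] : Prop :=
  ∀ a : S, ∃ b : S, a = a * b * a ∧ b = b * a * b

section Aux

variable {S : Type u} [Semigroup S]

private theorem withOne_cases (z : WithOne S) : z = 1 ∨ ∃ s : S, z = s := by
  rcases z with _ | s
  · exact Or.inl rfl
  · exact Or.inr ⟨s, rfl⟩

theorem leL_iff {a b : S} : leL a b ↔ ∃ s : WithOne S, (a : WithOne S) = s * b := by
  constructor
  · rintro (rfl | ⟨s, rfl⟩)
    · exact ⟨1, (one_mul _).symm⟩
    · exact ⟨s, by rw [WithOne.coe_mul]⟩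
  · rintro ⟨s, hs⟩
    rcases withOne_cases s with rfl | ⟨s', rfl⟩
    · exact Or.inl (WithOne.coe_inj.mp (by simpa using hs))
    · exact Or.inr ⟨s', WithOne.coe_inj.mp (by simpa [← WithOne.coe_mul] using hs)⟩

theorem leR_iff {a b : S} : leR a b ↔ ∃ t : WithOne S, (a : WithOne S) = b * t := by
  constructor
  · rintro (rfl | ⟨t, rfl⟩)
    · exact ⟨1, (mul_one _).symm⟩
    · exact ⟨t, by rw [WithOne.coe_mul]⟩
  · rintro ⟨t, ht⟩
    rcases withOne_cases t with rfl | ⟨t', rfl⟩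
    · exact Or.inl (WithOne.coe_inj.mp (by simpa using ht))
    · exact Or.inr ⟨t', WithOne.coe_inj.mp (by simpa [← WithOne.coe_mul] using ht)⟩

theorem leJ_iff {a b : S} : leJ a b ↔ ∃ s t : WithOne S, (a : WithOne S) = s * b * t := by
  constructor
  · rintro (rfl | ⟨s, rfl⟩ | ⟨t, rfl⟩ | ⟨s, t, rfl⟩)
    · exact ⟨1, 1, by simp⟩
    · exact ⟨s, 1, by simp [← WithOne.coe_mul]⟩
    · exact ⟨1, t, by simp [← WithOne.coe_mul]⟩
    · exact ⟨s, t, by simp [← WithOne.coe_mul]⟩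
  · rintro ⟨s, t, h⟩
    rcases withOne_cases s with rfl | ⟨s', rfl⟩ <;> rcases withOne_cases t with rfl | ⟨t', rfl⟩
    · exact Or.inl (WithOne.coe_inj.mp (by simpa using h))
    · exact Or.inr (Or.inr (Or.inl ⟨t', WithOne.coe_inj.mp (by simpa [← WithOne.coe_mul] using h)⟩))
    · exact Or.inr (Or.inl ⟨s', WithOne.coe_inj.mp (by simpa [← WithOne.coe_mul] using h)⟩)
    · exact Or.inr (Or.inr (Or.inr ⟨s', t', WithOne.coe_inj.mp (by simpa [← WithOne.coe_mul] using h)⟩))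

theorem leJ_refl (a : S) : leJ a a := Or.inl rfl

theorem leJ_trans {a b c : S} (h1 : leJ a b) (h2 : leJ b c) : leJ a c := by
  rw [leJ_iff] at *
  obtain ⟨s, t, h1⟩ := h1
  obtain ⟨u, v, h2⟩ := h2
  exact ⟨s * u, v * t, by rw [h1, h2]; simp only [mul_assoc]⟩

theorem leL_leJ {a b : S} (h : leL a b) : leJ a b := by
  rw [leL_iff] at h; obtain ⟨s, h⟩ := h
  exact leJ_iff.mpr ⟨s, 1, by rw [mul_one, h]⟩

theorem leR_leJ {a b : S} (h : leR a b) : leJ a b := by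
  rw [leR_iff] at h; obtain ⟨t, h⟩ := h
  exact leJ_iff.mpr ⟨1, t, by rw [h, one_mul]⟩

theorem eqvJ_symm {a b : S} (h : eqvJ a b) : eqvJ b a := ⟨h.2, h.1⟩

theorem eqvJ_trans {a b c : S} (h1 : eqvJ a b) (h2 : eqvJ b c) : eqvJ a c :=
  ⟨leJ_trans h1.1 h2.1, leJ_trans h2.2 h1.2⟩

theorem ltE_ltL {a b : S} (h : ltE a b) : ltL a b := by
  obtain ⟨haa, hbb, hba, hab, hne⟩ := h
  constructor
  · exact Or.inr ⟨a, hab.symm⟩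
  · rintro (rfl | ⟨s, hs⟩)
    · exact hne rfl
    · refine hne ?_
      have : b * a = b := by rw [hs, mul_assoc, haa]
      rw [← hba, this]

theorem ltE_ltR {a b : S} (h : ltE a b) : ltR a b := by
  obtain ⟨haa, hbb, hba, hab, hne⟩ := h
  constructor
  · exact Or.inr ⟨a, hba.symm⟩
  · rintro (rfl | ⟨t, ht⟩)
    · exact hne rfl
    · refine hne ?_
      have : a * b = b := by rw [ht, ← mul_assoc, haa]
      rw [← hab, this]

theorem ltE_ltH {a b : S} (h : ltE a b) : ltH a b :=
  ⟨⟨(ltE_ltL h).1, (ltE_ltR h).1⟩, fun hba => (ltE_ltL h).2 hba.1⟩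

theorem ltL_ltJ (hst : LeftStable S) {a b : S} (h : ltL a b) : ltJ a b := by
  refine ⟨leL_leJ h.1, fun hba => ?_⟩
  exact h.2 (hst a b h.1 ⟨leL_leJ h.1, hba⟩).2

theorem ltR_ltJ (hst : RightStable S) {a b : S} (h : ltR a b) : ltJ a b := by
  refine ⟨leR_leJ h.1, fun hba => ?_⟩
  exact h.2 (hst a b h.1 ⟨leR_leJ h.1, hba⟩).2

theorem ltH_ltJ (hst : Stable S) {a b : S} (h : ltH a b) : ltJ a b := by
  refine ⟨leL_leJ h.1.1, fun hba => ?_⟩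
  have hJ : eqvJ a b := ⟨leL_leJ h.1.1, hba⟩
  exact h.2 ⟨(hst.1 a b h.1.1 hJ).2, (hst.2 a b h.1.2 hJ).2⟩

theorem heightOf_mono {T : Type u} {lt1 lt2 : T → T → Prop}
    (h : ∀ a b, lt1 a b → lt2 a b) : heightOf lt1 ≤ heightOf lt2 := by
  refine iSup₂_le fun m hm => ?_
  obtain ⟨c, hc⟩ := hm
  exact le_iSup₂_of_le m ⟨c, fun i j hij => h _ _ (hc i j hij)⟩ le_rfl

theorem exists_idem (hreg : Regular S) (a : S) : ∃ f : S, f * f = f ∧ eqvJ f a := by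
  obtain ⟨b, h1, _⟩ := hreg a
  refine ⟨a * b, ?_, Or.inr (Or.inr (Or.inl ⟨b, rfl⟩)), Or.inr (Or.inr (Or.inl ⟨a, h1⟩))⟩
  rw [← mul_assoc, ← h1]

private theorem sandwich (e : S) (z : WithOne S) : ∃ w : S, (e : WithOne S) * z * e = w := by
  rcases withOne_cases z with rfl | ⟨s, rfl⟩
  · exact ⟨e * e, by rw [mul_one, ← WithOne.coe_mul]⟩
  · exact ⟨e * s * e, by simp [← WithOne.coe_mul]⟩

theorem descend (hreg : Regular S) {e a : S} (he : e * e = e) (h : leJ a e) :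
    ∃ w : S, w * w = w ∧ e * w = w ∧ w * e = w ∧ eqvJ w a := by
  obtain ⟨f, hf, hfa⟩ := exists_idem hreg a
  have hfe : leJ f e := leJ_trans hfa.1 h
  rw [leJ_iff] at hfe
  obtain ⟨x, y, hxy⟩ := hfe
  have hE : (e : WithOne S) * e = e := by rw [← WithOne.coe_mul, he]
  have hF : (f : WithOne S) * f = f := by rw [← WithOne.coe_mul, hf]
  have hE2 : ∀ z : WithOne S, (e : WithOne S) * ((e : WithOne S) * z) = e * z :=
    fun z => by rw [← mul_assoc, hE]
  have hF2 : ∀ z : WithOne S, (f : WithOne S) * ((f : WithOne S) * z) = f * z :=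
    fun z => by rw [← mul_assoc, hF]
  have hxy2 : ∀ z : WithOne S, x * ((e : WithOne S) * (y * z)) = (f : WithOne S) * z :=
    fun z => by rw [← mul_assoc, ← mul_assoc, ← hxy]
  obtain ⟨w, hw⟩ := sandwich e (y * (f : WithOne S) * ((f : WithOne S) * x))
  have hWvu : ((w : WithOne S)) =
      ((e : WithOne S) * y * f) * ((f : WithOne S) * x * e) := by
    rw [← hw]; simp only [mul_assoc]
  have hww : w * w = w := by
    have : ((w * w : S) : WithOne S) = (w : WithOne S) := by
      rw [WithOne.coe_mul, hWvu]
      simp only [mul_assoc, hE2, hF2, hxy2]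
    exact WithOne.coe_inj.mp this
  have hew : e * w = w := by
    have : ((e * w : S) : WithOne S) = (w : WithOne S) := by
      rw [WithOne.coe_mul, hWvu]
      simp only [mul_assoc, hE2, hF2, hxy2]
    exact WithOne.coe_inj.mp this
  have hwe : w * e = w := by
    have : ((w * e : S) : WithOne S) = (w : WithOne S) := by
      rw [WithOne.coe_mul, hWvu]
      simp only [mul_assoc, hE2, hF2, hxy2, hE]
    exact WithOne.coe_inj.mp this
  have hwf : eqvJ w f := by
    constructor
    · exact leJ_iff.mpr ⟨(e : WithOne S) * y, (f : WithOne S) * (x * e),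
        by rw [hWvu]; simp only [mul_assoc]⟩
    · refine leJ_iff.mpr ⟨(f : WithOne S) * x * e, (e : WithOne S) * y * f, ?_⟩
      rw [hWvu]
      simp only [mul_assoc, hE2, hF2, hxy2, hF]
  exact ⟨w, hww, hew, hwe, eqvJ_trans hwf hfa⟩

end Aux

section Chain

variable {S : Type u} [Semigroup S]

theorem chain_down (hreg : Regular S) : ∀ (m : ℕ) (c : Fin (m + 1) → S),
    (∀ i j : Fin (m + 1), i < j → ltJ (c j) (c i)) →
    ∃ e : Fin (m + 1) → S, (∀ i, e i * e i = e i ∧ eqvJ (e i) (c i)) ∧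
      (∀ i j, i < j → e i * e j = e j ∧ e j * e i = e j) := by
  intro m
  induction m with
  | zero =>
    intro c _
    obtain ⟨f, hf, hfa⟩ := exists_idem hreg (c 0)
    refine ⟨fun _ => f, fun i => ⟨hf, ?_⟩, fun i j hij => ?_⟩
    · have : i = 0 := Fin.ext (by omega)
      rw [this]; exact hfa
    · have h1 : (i : ℕ) < (j : ℕ) := hij
      have h2 : (j : ℕ) < 1 := j.isLt
      omega
  | succ k ih =>
    intro c hc
    obtain ⟨e, he1, he2⟩ := ih (fun i => c i.castSucc)
      (fun i j hij => hc _ _ (Fin.castSucc_lt_castSucc_iff.mpr hij))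
    have hlast : ltJ (c (Fin.last (k + 1))) (c (Fin.last k).castSucc) :=
      hc _ _ (Fin.castSucc_lt_last _)
    have hJae : leJ (c (Fin.last (k + 1))) (e (Fin.last k)) :=
      leJ_trans hlast.1 ((he1 (Fin.last k)).2).2
    obtain ⟨w, hw1, hw2, hw3, hw4⟩ := descend hreg (he1 (Fin.last k)).1 hJae
    refine ⟨Fin.snoc e w, ?_, ?_⟩
    · intro i
      induction i using Fin.lastCases with
      | last => rw [Fin.snoc_last]; exact ⟨hw1, hw4⟩
      | cast i => rw [Fin.snoc_castSucc]; exact he1 i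
    · intro i j hij
      induction j using Fin.lastCases with
      | last =>
        induction i using Fin.lastCases with
        | last => exact absurd hij (lt_irrefl _)
        | cast i =>
          rw [Fin.snoc_castSucc, Fin.snoc_last]
          rcases eq_or_lt_of_le (Fin.le_last i) with h | h
          · rw [h]; exact ⟨hw2, hw3⟩
          · obtain ⟨h1, h2⟩ := he2 i (Fin.last k) h
            constructor
            · rw [← hw2, ← mul_assoc, h1]
            · rw [← hw3, mul_assoc, h2]
      | cast j =>
        induction i using Fin.lastCases with
        | last => exact absurd (hij.trans (Fin.castSucc_lt_last j)) (lt_irrefl _)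
        | cast i =>
          rw [Fin.snoc_castSucc, Fin.snoc_castSucc]
          exact he2 i j (Fin.castSucc_lt_castSucc_iff.mp hij)

theorem HJ_le_HE (hreg : Regular S) : HJ S ≤ HE S := by
  refine iSup₂_le fun m hm => ?_
  obtain ⟨c, hc⟩ := hm
  cases m with
  | zero => exact le_iSup₂_of_le 0 ⟨c, fun i j _ => i.elim0⟩ le_rfl
  | succ k =>
    obtain ⟨e, he1, he2⟩ := chain_down hreg k c hc
    refine le_iSup₂_of_le (k + 1) ⟨e, ?_⟩ le_rfl
    intro i j hij
    obtain ⟨h1, h2⟩ := he2 i j hij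
    refine ⟨(he1 j).1, (he1 i).1, h1, h2, fun heq => ?_⟩
    have hij1 : leJ (c i) (e i) := ((he1 i).2).2
    have hij2 : leJ (e i) (c j) := heq ▸ ((he1 j).2).1
    exact (hc i j hij).2 (leJ_trans hij1 hij2)

end Chain

/-- For a regular and stable semigroup, the `L`-, `R`-, `H`-, `E`- and
`J`-heights all coincide. -/
theorem regular_stable_heights (S : Type u) [Semigroup S] (hreg : Regular S)
    (hst : Stable S) :
    HL S = HR S ∧ HL S = HH S ∧ HL S = HE S ∧ HL S = HJ S := by
  
  have hEL : HE S ≤ HL S := heightOf_mono fun _ _ => ltE_ltL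
  have hER : HE S ≤ HR S := heightOf_mono fun _ _ => ltE_ltR
  have hEH : HE S ≤ HH S := heightOf_mono fun _ _ => ltE_ltH
  have hLJ : HL S ≤ HJ S := heightOf_mono fun _ _ => ltL_ltJ hst.1
  have hRJ : HR S ≤ HJ S := heightOf_mono fun _ _ => ltR_ltJ hst.2
  have hHJ : HH S ≤ HJ S := heightOf_mono fun _ _ => ltH_ltJ hst
  have hJE : HJ S ≤ HE S := HJ_le_HE hreg
  have hLE : HL S = HE S := le_antisymm (hLJ.trans hJE) hEL
  have hLJ2 : HL S = HJ S := le_antisymm hLJ (hJE.trans hEL)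
  refine ⟨le_antisymm ?_ ?_, le_antisymm ?_ ?_, hLE, hLJ2⟩
  · exact (hLJ.trans hJE).trans hER
  · exact (hRJ.trans hJE).trans hEL
  · exact (hLJ.trans hJE).trans hEH
  · exact (hHJ.trans hJE).trans hEL

end GreenHeights
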